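/- arXiv:1905.13309 — 4 statements merged into one kernel-verified Lean document; each statement's English description precedes it below -/
import Mathlib

section
/- Let g : ℝ² → ℝ, let a, b be natural numbers such that (x,y) ↦ (x+iy)^a (x−iy)^b g(x,y) is integrable, let ψ ∈ ℝ, and let g' be the image rotated by angle ψ, i.e. g'(p) = g(R_{−ψ} p) where R_ψ is the rotation of ℝ² by angle ψ (so g'(x,y) = g(x cos ψ + y sin ψ, −x sin ψ + y cos ψ)). Then C_{ab}(g') = exp(i(a−b)ψ) · C_{ab}(g). -/
/-! In the complex coordinate `z = x + i y` the moment is `∫ zᵃ z̄ᵇ g(z)`, and rotating `g` by `ψ`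
means precomposing with `z ↦ e^{-iψ} z`. The substitution `z = e^{iψ} w` preserves Lebesgue measure
and pulls the factor `(e^{iψ})ᵃ (e^{-iψ})ᵇ = e^{i(a-b)ψ}` out of the integral. -/

open MeasureTheory ComplexConjugate

noncomputable def complexMoment (a b : ℕ) (h : ℂ → ℂ) : ℂ :=
  ∫ z : ℂ, z ^ a * conj z ^ b * h z

theorem integral_realProd_eq_integral_complex {E : Type*} [NormedAddCommGroup E]
    [NormedSpace ℝ E] (f : ℝ × ℝ → E) :
    ∫ p : ℝ × ℝ, f p = ∫ z : ℂ, f (z.re, z.im) :=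
  (Complex.volume_preserving_equiv_real_prod.integral_comp
    Complex.measurableEquivRealProd.measurableEmbedding f).symm

theorem integral_realProd_moment_eq_complexMoment (a b : ℕ) (h : ℝ × ℝ → ℝ) :
    ∫ p : ℝ × ℝ,
        ((p.1 : ℂ) + Complex.I * p.2) ^ a * ((p.1 : ℂ) - Complex.I * p.2) ^ b * (h p : ℂ)
      = complexMoment a b (fun z => h (z.re, z.im)) := by
  have h_add : ∀ z : ℂ, (z.re : ℂ) + Complex.I * z.im = z := fun z => by
    rw [mul_comm, Complex.re_add_im]
  have h_sub : ∀ z : ℂ, (z.re : ℂ) - Complex.I * z.im = conj z := fun z => by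
    apply Complex.ext <;> simp
  simp only [integral_realProd_eq_integral_complex, h_add, h_sub, complexMoment]

theorem complexMoment_comp_rotation (a b : ℕ) (c : Circle) (h : ℂ → ℂ) :
    complexMoment a b (h ∘ rotation c⁻¹) =
      (c : ℂ) ^ a * conj (c : ℂ) ^ b * complexMoment a b h := by
  rw [complexMoment, ← (rotation c).measurePreserving.integral_comp
    (rotation c).toHomeomorph.measurableEmbedding, complexMoment, ← integral_const_mul]
  congr 1 with z
  simp only [Function.comp_apply, rotation_apply, ← mul_assoc, ← Circle.coe_mul, inv_mul_cancel,
    Circle.coe_one, one_mul, map_mul, mul_pow]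
  ring

theorem rotation_exp_inv_apply (ψ : ℝ) (z : ℂ) :
    rotation (Circle.exp ψ)⁻¹ z =
      ⟨z.re * Real.cos ψ + z.im * Real.sin ψ, -z.re * Real.sin ψ + z.im * Real.cos ψ⟩ := by
  rw [← Circle.exp_neg, rotation_apply, Circle.coe_exp]
  apply Complex.ext <;>
    simp only [Complex.mul_re, Complex.mul_im, Complex.exp_ofReal_mul_I_re,
      Complex.exp_ofReal_mul_I_im, Real.cos_neg, Real.sin_neg] <;>
    ring

theorem Circle.coe_exp_pow_mul_conj_pow (ψ : ℝ) (a b : ℕ) :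
    (Circle.exp ψ : ℂ) ^ a * conj (Circle.exp ψ : ℂ) ^ b
      = Complex.exp (Complex.I * ((a : ℂ) - (b : ℂ)) * (ψ : ℂ)) := by
  rw [← Circle.coe_inv_eq_conj, ← Circle.exp_neg, Circle.coe_exp, Circle.coe_exp,
    ← Complex.exp_nat_mul, ← Complex.exp_nat_mul, ← Complex.exp_add]
  push_cast
  ring_nf

theorem complexMoment_rotation_general (g : ℝ × ℝ → ℝ) (a b : ℕ)
    (ψ : ℝ) (g' : ℝ × ℝ → ℝ)
    (hg' : ∀ p : ℝ × ℝ, g' p =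
      g (p.1 * Real.cos ψ + p.2 * Real.sin ψ, -p.1 * Real.sin ψ + p.2 * Real.cos ψ)) :
    (∫ p : ℝ × ℝ,
        ((p.1 : ℂ) + Complex.I * p.2) ^ a * ((p.1 : ℂ) - Complex.I * p.2) ^ b * (g' p : ℂ))
      = Complex.exp (Complex.I * ((a : ℂ) - (b : ℂ)) * (ψ : ℂ)) *
        ∫ p : ℝ × ℝ,
          ((p.1 : ℂ) + Complex.I * p.2) ^ a * ((p.1 : ℂ) - Complex.I * p.2) ^ b * (g p : ℂ) := by
  have hg'_rot : (fun z : ℂ => (g' (z.re, z.im) : ℂ))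
      = (fun z : ℂ => (g (z.re, z.im) : ℂ)) ∘ rotation (Circle.exp ψ)⁻¹ := by
    ext z
    simp only [Function.comp_apply, rotation_exp_inv_apply, hg']
  rw [integral_realProd_moment_eq_complexMoment, integral_realProd_moment_eq_complexMoment,
    hg'_rot, complexMoment_comp_rotation,
    Circle.coe_exp_pow_mul_conj_pow]

/-- Under rotation by angle `ψ`, the complex moment `C_{ab}` picks up the phase
`exp (i (a - b) ψ)`. -/
theorem complexMoment_rotation (g : ℝ × ℝ → ℝ) (a b : ℕ)
    (hab : Integrable (fun p : ℝ × ℝ =>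
      ((p.1 : ℂ) + Complex.I * p.2) ^ a * ((p.1 : ℂ) - Complex.I * p.2) ^ b * (g p : ℂ)))
    (ψ : ℝ) (g' : ℝ × ℝ → ℝ)
    (hg' : ∀ p : ℝ × ℝ, g' p =
      g (p.1 * Real.cos ψ + p.2 * Real.sin ψ, -p.1 * Real.sin ψ + p.2 * Real.cos ψ)) :
    (∫ p : ℝ × ℝ,
        ((p.1 : ℂ) + Complex.I * p.2) ^ a * ((p.1 : ℂ) - Complex.I * p.2) ^ b * (g' p : ℂ))
      = Complex.exp (Complex.I * ((a : ℂ) - (b : ℂ)) * (ψ : ℂ)) *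
        ∫ p : ℝ × ℝ,
          ((p.1 : ℂ) + Complex.I * p.2) ^ a * ((p.1 : ℂ) - Complex.I * p.2) ^ b * (g p : ℂ) :=
  complexMoment_rotation_general g a b ψ g' hg'
end

section
/- Let g : ℝ² → ℝ be nonnegative and integrable with ∫_{ℝ²} g > 0 and with integrable first moments, let k ≥ 1, and for j = 1,…,k let a_j, b_j, c_j be natural numbers with ∑_{j=1}^k c_j·((a_j : ℤ) − (b_j : ℤ)) = 0, such that each centered integrand ((x−x_c)+i(y−y_c))^{a_j}((x−x_c)−i(y−y_c))^{b_j} g(x,y) is integrable (for both images below). Let t(g) be obtained from g by a translation by (κ,β), a rotation by angle ψ about the centroid, and a uniform scaling by α > 0, i.e. t(g)(p) = g(R_{−ψ}((p − τ)/α)) with τ = (κ,β). Then with w_j = c_j(a_j+b_j+2)/2, ∏_{j=1}^k [ C^c_{a_j b_j}(t(g))^{c_j} / (∫_{ℝ²} t(g))^{w_j} ] = ∏_{j=1}^k [ C^c_{a_j b_j}(g)^{c_j} / (∫_{ℝ²} g)^{w_j} ], where each denominator is the real power (rpow) of the positive real total mass, coerced to ℂ; i.e. the normalized central complex moment product is invariant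 under translation, rotation and scaling. -/
/-!
Identify `ℝ²` with `ℂ`. The image `t(g)` is `g` transported by the similarity `z ↦ w z + τ`
with `w = α e^{iψ}`, so the mass gets multiplied by `|w|²`, the centroid moves to `w z_c + τ`,
and `C_{ab}` gets multiplied by `|w|² w^a w̄^b = |w|^{a+b+2} e^{i(a-b)ψ}`. The power
`(a+b+2)/2` of the mass cancels the modulus, and the phases `e^{i c_j (a_j-b_j) ψ}` multiply
to `1` because `∑ c_j (a_j - b_j) = 0`.
-/

open MeasureTheory

/-- The x-coordinate of the centroid of an image. -/
noncomputable def xc (g : ℝ × ℝ → ℝ) : ℝ :=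
  (∫ p : ℝ × ℝ, p.1 * g p) / (∫ p : ℝ × ℝ, g p)

/-- The y-coordinate of the centroid of an image. -/
noncomputable def yc (g : ℝ × ℝ → ℝ) : ℝ :=
  (∫ p : ℝ × ℝ, p.2 * g p) / (∫ p : ℝ × ℝ, g p)

/-- The central complex moment of order `(a, b)`. -/
noncomputable def centralComplexMoment (g : ℝ × ℝ → ℝ) (a b : ℕ) : ℂ :=
  ∫ p : ℝ × ℝ,
    (((p.1 - xc g : ℝ) : ℂ) + Complex.I * ((p.2 - yc g : ℝ) : ℂ)) ^ a *
      (((p.1 - xc g : ℝ) : ℂ) - Complex.I * ((p.2 - yc g : ℝ) : ℂ)) ^ b * (g p : ℂ)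

open Complex ComplexConjugate

theorem Complex.integral_comp_mul_left_add {F : Type*} [NormedAddCommGroup F] [NormedSpace ℝ F]
    (f : ℂ → F) (w τ : ℂ) : ∫ z, f (w * z + τ) = (normSq w)⁻¹ • ∫ z, f z := by
  let u : Circle := Circle.exp (arg w)
  have hw : ∀ z, w * z = ‖w‖ • rotation u z := fun z => by
    rw [rotation_apply, Circle.coe_exp, real_smul, ← mul_assoc, norm_mul_exp_arg_mul_I]
  calc ∫ z, f (w * z + τ)
      = ∫ z, f (‖w‖ • rotation u z + τ) := by simp_rw [hw]
    _ = ∫ z, f (‖w‖ • z + τ) :=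
        (rotation u).measurePreserving.integral_comp (rotation u).toHomeomorph.measurableEmbedding
          (fun z => f (‖w‖ • z + τ))
    _ = (normSq w)⁻¹ • ∫ z, f (z + τ) := by
        rw [Measure.integral_comp_smul volume (fun z => f (z + τ)), finrank_real_complex,
          normSq_eq_norm_sq, abs_of_nonneg (by positivity)]
    _ = (normSq w)⁻¹ • ∫ z, f z := by rw [integral_add_right_eq_self f τ]

noncomputable def similarity (w τ : ℂ) (q : ℝ × ℝ) : ℝ × ℝ :=
  measurableEquivRealProd (w * measurableEquivRealProd.symm q + τ)

@[simp] lemma similarity_fst (w τ : ℂ) (q : ℝ × ℝ) :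
    (similarity w τ q).1 = w.re * q.1 - w.im * q.2 + τ.re := by
  simp [similarity, measurableEquivRealProd_apply]

@[simp] lemma similarity_snd (w τ : ℂ) (q : ℝ × ℝ) :
    (similarity w τ q).2 = w.im * q.1 + w.re * q.2 + τ.im := by
  simp [similarity, measurableEquivRealProd_apply]
  ring

theorem integral_comp_similarity {F : Type*} [NormedAddCommGroup F] [NormedSpace ℝ F]
    (f : ℝ × ℝ → F) (w τ : ℂ) :
    ∫ q, f (similarity w τ q) = (normSq w)⁻¹ • ∫ p, f p := by
  have e := volume_preserving_equiv_real_prod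
  rw [← e.integral_comp', ← e.integral_comp']
  simpa [similarity] using integral_comp_mul_left_add (f ∘ measurableEquivRealProd) w τ

theorem integral_affine_mul {g : ℝ × ℝ → ℝ} (hg : Integrable g)
    (hx : Integrable fun p : ℝ × ℝ => p.1 * g p) (hy : Integrable fun p : ℝ × ℝ => p.2 * g p)
    (u v t : ℝ) :
    ∫ p, (u * p.1 + v * p.2 + t) * g p
      = u * (∫ p, p.1 * g p) + v * (∫ p, p.2 * g p) + t * ∫ p, g p := by
  simp_rw [add_mul, mul_assoc]
  rw [integral_add (by fun_prop) (hg.const_mul t), integral_add (hx.const_mul u) (hy.const_mul v),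
    integral_const_mul, integral_const_mul, integral_const_mul]

noncomputable def centroid (g : ℝ × ℝ → ℝ) : ℂ := ⟨xc g, yc g⟩

lemma centralComplexMoment_eq_integral (g : ℝ × ℝ → ℝ) (a b : ℕ) :
    centralComplexMoment g a b = ∫ p, (measurableEquivRealProd.symm p - centroid g) ^ a *
      conj (measurableEquivRealProd.symm p - centroid g) ^ b * (g p : ℂ) := by
  unfold centralComplexMoment
  congr 1
  ext p
  congr 3 <;> apply Complex.ext <;> simp [centroid]
  ring

lemma integral_eq_normSq_smul_integral_comp_similarity {F : Type*} [NormedAddCommGroup F]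
    [NormedSpace ℝ F] (f : ℝ × ℝ → F) {w : ℂ} (hw : w ≠ 0) (τ : ℂ) :
    ∫ p, f p = normSq w • ∫ q, f (similarity w τ q) := by
  rw [integral_comp_similarity, smul_inv_smul₀ (normSq_pos.2 hw).ne']

section Similarity

variable {g tg : ℝ × ℝ → ℝ} {w τ : ℂ}

lemma integral_of_comp_similarity (hw : w ≠ 0) (hcomp : ∀ q, tg (similarity w τ q) = g q) :
    ∫ p, tg p = normSq w * ∫ q, g q := by
  rw [integral_eq_normSq_smul_integral_comp_similarity tg hw τ, smul_eq_mul]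
  simp_rw [hcomp]

lemma centroid_of_comp_similarity (hw : w ≠ 0) (hg : Integrable g)
    (hx : Integrable fun p : ℝ × ℝ => p.1 * g p) (hy : Integrable fun p : ℝ × ℝ => p.2 * g p)
    (hM : ∫ p, g p ≠ 0) (hcomp : ∀ q, tg (similarity w τ q) = g q) :
    centroid tg = w * centroid g + τ := by
  have hfst : ∫ p, p.1 * tg p
      = normSq w * (w.re * (∫ p, p.1 * g p) + -w.im * (∫ p, p.2 * g p) + τ.re * ∫ p, g p) := by
    rw [integral_eq_normSq_smul_integral_comp_similarity _ hw τ, smul_eq_mul]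
    simp_rw [hcomp, similarity_fst, sub_eq_add_neg, ← neg_mul, integral_affine_mul hg hx hy]
  have hsnd : ∫ p, p.2 * tg p
      = normSq w * (w.im * (∫ p, p.1 * g p) + w.re * (∫ p, p.2 * g p) + τ.im * ∫ p, g p) := by
    rw [integral_eq_normSq_smul_integral_comp_similarity _ hw τ, smul_eq_mul]
    simp_rw [hcomp, similarity_snd, integral_affine_mul hg hx hy]
  have hN := (normSq_pos.2 hw).ne'
  apply Complex.ext <;>
  · simp only [centroid, xc, yc, hfst, hsnd, integral_of_comp_similarity hw hcomp, add_re,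
      add_im, mul_re, mul_im]
    field_simp
    ring

lemma centralComplexMoment_of_comp_similarity (hw : w ≠ 0)
    (hcomp : ∀ q, tg (similarity w τ q) = g q) (hc : centroid tg = w * centroid g + τ) (a b : ℕ) :
    centralComplexMoment tg a b
      = normSq w * w ^ a * conj w ^ b * centralComplexMoment g a b := by
  rw [centralComplexMoment_eq_integral, centralComplexMoment_eq_integral,
    integral_eq_normSq_smul_integral_comp_similarity _ hw τ, ← integral_const_mul, real_smul,
    ← integral_const_mul]
  congr 1
  ext q
  rw [hcomp]
  have hz : measurableEquivRealProd.symm (similarity w τ q) - centroid tg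
      = w * (measurableEquivRealProd.symm q - centroid g) := by
    rw [similarity, MeasurableEquiv.symm_apply_apply, hc]
    ring
  rw [hz, map_mul, mul_pow, mul_pow]
  ring

end Similarity

lemma normSq_mul_pow_mul_conj_pow (w : ℂ) (a b : ℕ) :
    normSq w * w ^ a * conj w ^ b
      = (‖w‖ : ℂ) ^ (a + b + 2) * exp (((a : ℤ) - b : ℤ) * (arg w * I)) := by
  have hw : w = ‖w‖ * exp (arg w * I) := (norm_mul_exp_arg_mul_I w).symm
  have hconj : conj w = ‖w‖ * exp (-(arg w * I)) := by
    conv_lhs => rw [hw]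
    rw [map_mul, conj_ofReal, ← exp_conj, map_mul, conj_ofReal, conj_I, mul_neg]
  have hexp : exp (((a : ℤ) - b : ℤ) * (arg w * I))
      = exp (arg w * I) ^ a * exp (-(arg w * I)) ^ b := by
    rw [← exp_nat_mul, ← exp_nat_mul, ← exp_add]
    push_cast
    ring_nf
  have hpow : w ^ a = (‖w‖ : ℂ) ^ a * exp (arg w * I) ^ a := by rw [← mul_pow, ← hw]
  rw [hconj, hexp, normSq_eq_norm_sq, hpow]
  push_cast
  ring

lemma sq_mul_rpow_natCast_div_two {r M : ℝ} (hr : 0 ≤ r) (hM : 0 ≤ M) (n : ℕ) :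
    (r ^ 2 * M) ^ ((n : ℝ) / 2) = r ^ n * M ^ ((n : ℝ) / 2) := by
  rw [Real.mul_rpow (by positivity) hM, ← Real.rpow_natCast r 2, ← Real.rpow_mul hr,
    ← Real.rpow_natCast r n]
  ring_nf

lemma normSq_mul_pow_mul_conj_pow_mul_pow_div_rpow {w : ℂ} (hw : w ≠ 0) {M : ℝ} (hM : 0 ≤ M)
    (C : ℂ) (a b c : ℕ) :
    (normSq w * w ^ a * conj w ^ b * C) ^ c /
        ((normSq w * M) ^ ((c : ℝ) * ((a : ℝ) + b + 2) / 2) : ℝ)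
      = exp (((c : ℤ) * ((a : ℤ) - b) : ℤ) * (arg w * I))
          * (C ^ c / (M ^ ((c : ℝ) * ((a : ℝ) + b + 2) / 2) : ℝ)) := by
  have hden := sq_mul_rpow_natCast_div_two (norm_nonneg w) hM (c * (a + b + 2))
  push_cast at hden
  have hr : (‖w‖ : ℂ) ^ (c * (a + b + 2)) ≠ 0 := pow_ne_zero _ (by simpa using hw)
  rw [normSq_mul_pow_mul_conj_pow, normSq_eq_norm_sq, hden, mul_pow, mul_pow, ← pow_mul,
    ← exp_nat_mul, ofReal_mul, ofReal_pow, mul_comm (a + b + 2), mul_assoc,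
    mul_div_mul_left _ _ hr, mul_div_assoc]
  push_cast
  ring_nf

theorem normalizedCentralComplexMomentProduct_TRS_invariant_general (g : ℝ × ℝ → ℝ)
    (hg : Integrable g) (hpos : 0 < ∫ p : ℝ × ℝ, g p)
    (hx : Integrable (fun p : ℝ × ℝ => p.1 * g p))
    (hy : Integrable (fun p : ℝ × ℝ => p.2 * g p))
    (k : ℕ) (a b c : Fin k → ℕ)
    (hsum : ∑ j : Fin k, (c j : ℤ) * ((a j : ℤ) - (b j : ℤ)) = 0)
    (κ β ψ α : ℝ) (hα : 0 < α) (tg : ℝ × ℝ → ℝ)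
    (htg : ∀ p : ℝ × ℝ, tg p =
      g (((p.1 - κ) / α) * Real.cos ψ + ((p.2 - β) / α) * Real.sin ψ,
        -(((p.1 - κ) / α)) * Real.sin ψ + ((p.2 - β) / α) * Real.cos ψ)) :
    (∏ j : Fin k, centralComplexMoment tg (a j) (b j) ^ (c j) /
        ((((∫ p : ℝ × ℝ, tg p) ^ ((c j : ℝ) * ((a j : ℝ) + b j + 2) / 2) : ℝ)) : ℂ))
      = ∏ j : Fin k, centralComplexMoment g (a j) (b j) ^ (c j) /
          ((((∫ p : ℝ × ℝ, g p) ^ ((c j : ℝ) * ((a j : ℝ) + b j + 2) / 2) : ℝ)) : ℂ) := by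
  set w : ℂ := α * exp (ψ * I)
  have hw : w ≠ 0 := mul_ne_zero (ofReal_ne_zero.2 hα.ne') (exp_ne_zero _)
  have hcomp : ∀ q, tg (similarity w ⟨κ, β⟩ q) = g q := by
    intro q
    have hre : w.re = α * Real.cos ψ := by simp [w, exp_ofReal_mul_I_re]
    have him : w.im = α * Real.sin ψ := by simp [w, exp_ofReal_mul_I_im]
    rw [htg, similarity_fst, similarity_snd, hre, him]
    congr 1
    ext
    · field_simp
      linear_combination α * q.1 * Real.cos_sq_add_sin_sq ψ
    · field_simp
      linear_combination α * q.2 * Real.cos_sq_add_sin_sq ψ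
  have hcentroid := centroid_of_comp_similarity hw hg hx hy hpos.ne' hcomp
  simp_rw [centralComplexMoment_of_comp_similarity hw hcomp hcentroid,
    integral_of_comp_similarity hw hcomp,
    normSq_mul_pow_mul_conj_pow_mul_pow_div_rpow hw hpos.le, Finset.prod_mul_distrib,
    ← exp_sum, ← Finset.sum_mul, ← Int.cast_sum, hsum, Int.cast_zero, zero_mul, exp_zero, one_mul]

/-- The normalized phase-cancelled product of central complex moments is invariant
under a combined translation, rotation about the centroid and uniform scaling. -/
theorem normalizedCentralComplexMomentProduct_TRS_invariant (g : ℝ × ℝ → ℝ)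
    (hnn : ∀ p, 0 ≤ g p) (hg : Integrable g) (hpos : 0 < ∫ p : ℝ × ℝ, g p)
    (hx : Integrable (fun p : ℝ × ℝ => p.1 * g p))
    (hy : Integrable (fun p : ℝ × ℝ => p.2 * g p))
    (k : ℕ) (hk : 1 ≤ k) (a b c : Fin k → ℕ)
    (hsum : ∑ j : Fin k, (c j : ℤ) * ((a j : ℤ) - (b j : ℤ)) = 0)
    (κ β ψ α : ℝ) (hα : 0 < α) (tg : ℝ × ℝ → ℝ)
    (htg : ∀ p : ℝ × ℝ, tg p =
      g (((p.1 - κ) / α) * Real.cos ψ + ((p.2 - β) / α) * Real.sin ψ,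
        -(((p.1 - κ) / α)) * Real.sin ψ + ((p.2 - β) / α) * Real.cos ψ))
    (hintg : ∀ j : Fin k, Integrable (fun p : ℝ × ℝ =>
      (((p.1 - xc g : ℝ) : ℂ) + Complex.I * ((p.2 - yc g : ℝ) : ℂ)) ^ (a j) *
        (((p.1 - xc g : ℝ) : ℂ) - Complex.I * ((p.2 - yc g : ℝ) : ℂ)) ^ (b j) * (g p : ℂ)))
    (hinttg : ∀ j : Fin k, Integrable (fun p : ℝ × ℝ =>
      (((p.1 - xc tg : ℝ) : ℂ) + Complex.I * ((p.2 - yc tg : ℝ) : ℂ)) ^ (a j) *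
        (((p.1 - xc tg : ℝ) : ℂ) - Complex.I * ((p.2 - yc tg : ℝ) : ℂ)) ^ (b j) * (tg p : ℂ))) :
    (∏ j : Fin k, centralComplexMoment tg (a j) (b j) ^ (c j) /
        ((((∫ p : ℝ × ℝ, tg p) ^ ((c j : ℝ) * ((a j : ℝ) + b j + 2) / 2) : ℝ)) : ℂ))
      = ∏ j : Fin k, centralComplexMoment g (a j) (b j) ^ (c j) /
          ((((∫ p : ℝ × ℝ, g p) ^ ((c j : ℝ) * ((a j : ℝ) + b j + 2) / 2) : ℝ)) : ℂ) :=
  normalizedCentralComplexMomentProduct_TRS_invariant_general g hg hpos hx hy k a b c hsum κ β ψ α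
    hα tg htg
end

section
/- Let R > 0 and let g : ℝ × ℝ → ℂ (a polar-coordinate image) be integrable on [0,R] × [0,2π] with g(r,θ) = 0 for r > R. Let α > 0 and define the scaled image g'(r,θ) = g(r/α, θ), which is supported in r ≤ αR. Then for all ρ, ψ ∈ ℝ, the radius-normalized polar spectra satisfy S_{g',αR}(ρ,ψ) = α · S_{g,R}(ρ,ψ). -/
open MeasureTheory

/-- The radius-normalized polar spectrum of a polar-coordinate image `g` with radius `R`. -/
noncomputable def polarSpectrum (g : ℝ × ℝ → ℂ) (R ρ ψ : ℝ) : ℂ :=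
  ∫ r in (0 : ℝ)..R, ∫ θ in (0 : ℝ)..(2 * Real.pi),
    g (r, θ) * Complex.exp (-(2 * Real.pi * Complex.I) * (((r / R) * ρ + θ * ψ : ℝ) : ℂ))

theorem polarSpectrum_comp_div_fst (g : ℝ × ℝ → ℂ) (R ρ ψ : ℝ) {α : ℝ} (hα : α ≠ 0) :
    polarSpectrum (fun p => g (p.1 / α, p.2)) (α * R) ρ ψ = α * polarSpectrum g R ρ ψ := by
  -- the substitution `r = α s` in the radial integral
  have hsubst := intervalIntegral.smul_integral_comp_mul_left (a := 0) (b := R) (fun r =>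
    ∫ θ in (0 : ℝ)..(2 * Real.pi), g (r / α, θ) *
      Complex.exp (-(2 * Real.pi * Complex.I) * (((r / (α * R)) * ρ + θ * ψ : ℝ) : ℂ))) α
  rw [mul_zero, Complex.real_smul] at hsubst
  simp only [polarSpectrum, ← hsubst, mul_div_mul_left _ _ hα, mul_div_cancel_left₀ _ hα]

theorem polarSpectrum_scaling_general (R : ℝ) (g : ℝ × ℝ → ℂ)
    (α : ℝ) (hα : 0 < α) (g' : ℝ × ℝ → ℂ)
    (hg' : ∀ p : ℝ × ℝ, g' p = g (p.1 / α, p.2)) :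
    ∀ ρ ψ : ℝ, polarSpectrum g' (α * R) ρ ψ = (α : ℂ) * polarSpectrum g R ρ ψ := by
  intro ρ ψ
  rw [funext hg']
  exact polarSpectrum_comp_div_fst g R ρ ψ hα.ne'

/-- Under uniform scaling, the radius-normalized polar spectrum scales by `α`. -/
theorem polarSpectrum_scaling (R : ℝ) (hR : 0 < R) (g : ℝ × ℝ → ℂ)
    (hint : IntegrableOn g (Set.Icc 0 R ×ˢ Set.Icc 0 (2 * Real.pi)))
    (hzero : ∀ r θ : ℝ, R < r → g (r, θ) = 0)
    (α : ℝ) (hα : 0 < α) (g' : ℝ × ℝ → ℂ)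
    (hg' : ∀ p : ℝ × ℝ, g' p = g (p.1 / α, p.2)) :
    ∀ ρ ψ : ℝ, polarSpectrum g' (α * R) ρ ψ = (α : ℂ) * polarSpectrum g R ρ ψ :=
  polarSpectrum_scaling_general R g α hα g' hg'
end

section
/- Let R > 0, let g : ℝ × ℝ → ℂ be integrable on [0,R] × [0,2π] with g(r,θ) = 0 for r > R, and assume S_{g,R}(0,0) ≠ 0. Let α > 0 and g'(r,θ) = g(r/α, θ). Then for all ρ, ψ ∈ ℝ, the normalized spectrum is scale invariant: S_{g',αR}(ρ,ψ) / S_{g',αR}(0,0) = S_{g,R}(ρ,ψ) / S_{g,R}(0,0). -/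
open MeasureTheory

theorem polarSpectrum_comp_div_mul (g : ℝ × ℝ → ℂ) {c : ℝ} (hc : c ≠ 0) (R ρ ψ : ℝ) :
    polarSpectrum (fun p => g (p.1 / c, p.2)) (c * R) ρ ψ = c * polarSpectrum g R ρ ψ := by
  have hradial : ∀ r : ℝ, r / (c * R) = r / c / R := fun r => by rw [div_div, mul_comm]
  simp only [polarSpectrum, hradial]
  rw [intervalIntegral.integral_comp_div (fun s => ∫ θ in (0 : ℝ)..(2 * Real.pi),
      g (s, θ) * Complex.exp (-(2 * Real.pi * Complex.I) * (((s / R) * ρ + θ * ψ : ℝ) : ℂ))) hc,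
    zero_div, mul_div_cancel_left₀ R hc, Complex.real_smul]

theorem normalizedPolarSpectrum_scale_invariant_general (R : ℝ) (g : ℝ × ℝ → ℂ)
    (α : ℝ) (hα : 0 < α) (g' : ℝ × ℝ → ℂ)
    (hg' : ∀ p : ℝ × ℝ, g' p = g (p.1 / α, p.2)) :
    ∀ ρ ψ : ℝ, polarSpectrum g' (α * R) ρ ψ / polarSpectrum g' (α * R) 0 0
      = polarSpectrum g R ρ ψ / polarSpectrum g R 0 0 := by
  intro ρ ψ
  obtain rfl : g' = fun p => g (p.1 / α, p.2) := funext hg'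
  rw [polarSpectrum_comp_div_mul g hα.ne', polarSpectrum_comp_div_mul g hα.ne',
    mul_div_mul_left _ _ (Complex.ofReal_ne_zero.mpr hα.ne')]

/-- The spectrum normalized by its value at the origin is scale invariant. -/
theorem normalizedPolarSpectrum_scale_invariant (R : ℝ) (hR : 0 < R) (g : ℝ × ℝ → ℂ)
    (hint : IntegrableOn g (Set.Icc 0 R ×ˢ Set.Icc 0 (2 * Real.pi)))
    (hzero : ∀ r θ : ℝ, R < r → g (r, θ) = 0)
    (hS0 : polarSpectrum g R 0 0 ≠ 0)
    (α : ℝ) (hα : 0 < α) (g' : ℝ × ℝ → ℂ)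
    (hg' : ∀ p : ℝ × ℝ, g' p = g (p.1 / α, p.2)) :
    ∀ ρ ψ : ℝ, polarSpectrum g' (α * R) ρ ψ / polarSpectrum g' (α * R) 0 0
      = polarSpectrum g R ρ ψ / polarSpectrum g R 0 0 :=
  normalizedPolarSpectrum_scale_invariant_general R g α hα g' hg'
end
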